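/- arXiv:2402.08279 — 2 statements merged into one kernel-verified Lean document; each statement's English description precedes it below -/
import Mathlib

section
/- For any subspace lattice 𝔏 in a complex Banach space, every pinch point of 𝔏 is a pinch point of Lat(Alg(𝔏)), i.e., Pin(𝔏) ⊆ Pin(Lat(Alg(𝔏))). -/
open ContinuousLinearMap

/-- The closed linear span (join) of a family of subspaces. -/
noncomputable def cJoin {X : Type*} [NormedAddCommGroup X] [NormedSpace ℂ X]
    (S : Set (Submodule ℂ X)) : Submodule ℂ X :=
  (sSup S).topologicalClosure

/-- Join of two subspaces in the lattice of closed subspaces. -/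
noncomputable def cJoin2 {X : Type*} [NormedAddCommGroup X] [NormedSpace ℂ X]
    (M N : Submodule ℂ X) : Submodule ℂ X :=
  (M ⊔ N).topologicalClosure

/-- A subspace lattice: a complete lattice of closed subspaces containing the trivial ones. -/
def IsSubspaceLattice {X : Type*} [NormedAddCommGroup X] [NormedSpace ℂ X]
    (L : Set (Submodule ℂ X)) : Prop :=
  (∀ M ∈ L, IsClosed (M : Set X)) ∧ ⊥ ∈ L ∧ ⊤ ∈ L ∧
    ∀ S ⊆ L, cJoin S ∈ L ∧ sInf S ∈ L

/-- Alg(F): bounded operators leaving every member of F invariant. -/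
def algOf {X : Type*} [NormedAddCommGroup X] [NormedSpace ℂ X]
    (L : Set (Submodule ℂ X)) : Set (X →L[ℂ] X) :=
  {A | ∀ M ∈ L, ∀ x ∈ M, A x ∈ M}

/-- Lat(T): closed subspaces invariant under every operator in T. -/
def latOf {X : Type*} [NormedAddCommGroup X] [NormedSpace ℂ X]
    (T : Set (X →L[ℂ] X)) : Set (Submodule ℂ X) :=
  {M | IsClosed (M : Set X) ∧ ∀ A ∈ T, ∀ x ∈ M, A x ∈ M}

/-- The rank-one operator e ⊗ η : x ↦ η(x) • e. -/
noncomputable def rankOne {X : Type*} [NormedAddCommGroup X] [NormedSpace ℂ X]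
    (e : X) (η : X →L[ℂ] ℂ) : X →L[ℂ] X :=
  η.smulRight e

/-- The rank-one operators in a set of operators. -/
noncomputable def Rk1 {X : Type*} [NormedAddCommGroup X] [NormedSpace ℂ X]
    (T : Set (X →L[ℂ] X)) : Set (X →L[ℂ] X) :=
  {A ∈ T | ∃ (e : X) (η : X →L[ℂ] ℂ), e ≠ 0 ∧ η ≠ 0 ∧ A = rankOne e η}

/-- M₋ = ⋁{K ∈ L : M ⊄ K}. -/
noncomputable def mMinus {X : Type*} [NormedAddCommGroup X] [NormedSpace ℂ X]
    (L : Set (Submodule ℂ X)) (M : Submodule ℂ X) : Submodule ℂ X :=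
  cJoin {K | K ∈ L ∧ ¬ M ≤ K}

/-- M₊ = ⋀{K ∈ L : K ⊄ M}. -/
noncomputable def mPlus {X : Type*} [NormedAddCommGroup X] [NormedSpace ℂ X]
    (L : Set (Submodule ℂ X)) (M : Submodule ℂ X) : Submodule ℂ X :=
  sInf {K | K ∈ L ∧ ¬ K ≤ M}

/-- N_* = ⋀{M₋ : M ∈ L, M ⊄ N}. -/
noncomputable def nStar {X : Type*} [NormedAddCommGroup X] [NormedSpace ℂ X]
    (L : Set (Submodule ℂ X)) (N : Submodule ℂ X) : Submodule ℂ X :=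
  sInf {P | ∃ M, M ∈ L ∧ ¬ M ≤ N ∧ P = mMinus L M}

/-- The cyclic subspace [Alg(L)x]: closed linear span of the orbit of x under Alg(L). -/
noncomputable def cyclicSubspace {X : Type*} [NormedAddCommGroup X] [NormedSpace ℂ X]
    (L : Set (Submodule ℂ X)) (x : X) : Submodule ℂ X :=
  (Submodule.span ℂ ((fun A : X →L[ℂ] X => A x) '' algOf L)).topologicalClosure

/-- The pinch points of a family of subspaces. -/
def pinOf {X : Type*} [NormedAddCommGroup X] [NormedSpace ℂ X]
    (L : Set (Submodule ℂ X)) : Set (Submodule ℂ X) :=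
  {P | P ∈ L ∧ ∀ M ∈ L, M ≤ P ∨ P ≤ M}

/-!
If `P` is a pinch point of `𝔏` and `η` is a functional vanishing on `P`, then `p ⊗ η` lies in
`Alg 𝔏` for every `p ∈ P`: members of `𝔏` below `P` are killed, those above `P` contain `p`.
Given an invariant subspace `M ⊄ P`, Hahn–Banach yields `m ∈ M` and such an `η` with `η m ≠ 0`;
then `(p ⊗ η) m = η m • p ∈ M` for all `p ∈ P`, so `P ⊆ M`.
-/

theorem exists_dual_ne_zero_of_notMem {𝕜 E : Type*} [RCLike 𝕜] [NormedAddCommGroup E]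
    [NormedSpace 𝕜 E] {P : Submodule 𝕜 E} (hP : IsClosed (P : Set E)) {x : E} (hx : x ∉ P) :
    ∃ η : StrongDual 𝕜 E, η x ≠ 0 ∧ ∀ y ∈ P, η y = 0 := by
  have := hP -- as an instance, this makes `E ⧸ P` a normed space
  have hqx : P.mkQL x ≠ 0 := by simpa [Submodule.Quotient.mk_eq_zero] using hx
  obtain ⟨f, hf⟩ := SeparatingDual.exists_ne_zero (R := 𝕜) hqx
  refine ⟨f.comp P.mkQL, hf, fun y hy => ?_⟩
  simp [(Submodule.Quotient.mk_eq_zero P).mpr hy]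

section

variable {X : Type*} [NormedAddCommGroup X] [NormedSpace ℂ X] {L : Set (Submodule ℂ X)}
  {P : Submodule ℂ X}

@[simp]
theorem rankOne_apply (e : X) (η : X →L[ℂ] ℂ) (x : X) : rankOne e η x = η x • e := rfl

theorem subset_latOf_algOf (hL : ∀ M ∈ L, IsClosed (M : Set X)) : L ⊆ latOf (algOf L) :=
  fun M hM => ⟨hL M hM, fun _ hA x hx => hA M hM x hx⟩

theorem rankOne_mem_algOf (hP : ∀ K ∈ L, K ≤ P ∨ P ≤ K) {e : X} (he : e ∈ P) {η : X →L[ℂ] ℂ}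
    (hη : ∀ x ∈ P, η x = 0) : rankOne e η ∈ algOf L := by
  intro K hK x hx
  rcases hP K hK with hKP | hPK
  · simp [hη x (hKP hx)]
  · simpa using K.smul_mem (η x) (hPK he)

theorem le_or_le_of_mem_latOf_algOf (hPc : IsClosed (P : Set X))
    (hP : ∀ K ∈ L, K ≤ P ∨ P ≤ K) {M : Submodule ℂ X} (hM : M ∈ latOf (algOf L)) :
    M ≤ P ∨ P ≤ M := by
  refine or_iff_not_imp_left.mpr fun hMP => ?_
  obtain ⟨m, hmM, hmP⟩ := SetLike.not_le_iff_exists.mp hMP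
  obtain ⟨η, hηm, hηP⟩ := exists_dual_ne_zero_of_notMem hPc hmP
  intro p hp
  have hpm : η m • p ∈ M := by
    simpa using hM.2 _ (rankOne_mem_algOf hP hp hηP) m hmM
  exact (M.smul_mem_iff hηm).mp hpm

end

theorem pin_subset_pin_latAlg_general
    {X : Type*} [NormedAddCommGroup X] [NormedSpace ℂ X]
    (L : Set (Submodule ℂ X)) (hL : IsSubspaceLattice L) :
    pinOf L ⊆ pinOf (latOf (algOf L)) := by
  rintro P ⟨hPL, hPin⟩
  exact ⟨subset_latOf_algOf hL.1 hPL,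
    fun M hM => le_or_le_of_mem_latOf_algOf (hL.1 P hPL) hPin hM⟩

/-- Every pinch point of 𝔏 is a pinch point of Lat(Alg(𝔏)). -/
theorem pin_subset_pin_latAlg
    {X : Type*} [NormedAddCommGroup X] [NormedSpace ℂ X] [CompleteSpace X]
    (L : Set (Submodule ℂ X)) (hL : IsSubspaceLattice L) :
    pinOf L ⊆ pinOf (latOf (algOf L)) :=
  pin_subset_pin_latAlg_general L hL
end

section
/- Every nest 𝔑 in a complex Banach space is strongly reflexive: N_* = N for all N ∈ 𝔑, where N_* = ⋀{M₋ : M ∈ 𝔑, M ⊄ N}; in particular, 𝔑 equals the lattice of all closed subspaces invariant under the rank-one operators in Alg(𝔑). -/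
open ContinuousLinearMap

section Aux

variable {X : Type*} [NormedAddCommGroup X] [NormedSpace ℂ X]

lemma cJoin_le' {S : Set (Submodule ℂ X)} {N : Submodule ℂ X} (hN : IsClosed (N : Set X))
    (h : ∀ M ∈ S, M ≤ N) : cJoin S ≤ N :=
  Submodule.topologicalClosure_minimal _ (sSup_le h) hN

lemma le_cJoin' {S : Set (Submodule ℂ X)} {M : Submodule ℂ X} (hM : M ∈ S) : M ≤ cJoin S :=
  (le_sSup hM).trans (Submodule.le_topologicalClosure _)

/-- Hahn–Banach: a continuous functional vanishing on a closed subspace and nonzero at a point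
outside it. -/
lemma aux_exists_functional (M : Submodule ℂ X) (hM : IsClosed (M : Set X)) {y : X}
    (hy : y ∉ M) : ∃ η : X →L[ℂ] ℂ, η y ≠ 0 ∧ ∀ x ∈ M, η x = 0 := by
  haveI : IsClosed (M : Set X) := hM
  let q : X →L[ℂ] (X ⧸ M) := M.mkQ.mkContinuous 1 (fun m => by
    simpa using Submodule.Quotient.norm_mk_le M m)
  have hqy : q y ≠ 0 := by
    simpa [q, LinearMap.mkContinuous_apply, Submodule.mkQ_apply,
      Submodule.Quotient.mk_eq_zero] using hy
  obtain ⟨g, hg⟩ := SeparatingDual.exists_ne_zero (R := ℂ) hqy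
  refine ⟨g.comp q, by simpa using hg, fun x hx => ?_⟩
  have hqx : q x = 0 := by
    simpa [q, LinearMap.mkContinuous_apply, Submodule.mkQ_apply,
      Submodule.Quotient.mk_eq_zero] using hx
  simp [hqx]

end Aux

/-- Every nest is strongly reflexive; in particular it is determined by the rank-one
operators of its algebra. -/
theorem nest_stronglyReflexive
    {X : Type*} [NormedAddCommGroup X] [NormedSpace ℂ X] [CompleteSpace X]
    (L : Set (Submodule ℂ X)) (hL : IsSubspaceLattice L)
    (hnest : ∀ M ∈ L, ∀ N ∈ L, M ≤ N ∨ N ≤ M) :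
    (∀ N ∈ L, nStar L N = N) ∧ latOf (Rk1 (algOf L)) = L := by
  obtain ⟨hclosed, hbot, htop, hcomplete⟩ := hL
  -- M₋ is in L and is below M
  have hmm_mem : ∀ M ∈ L, mMinus L M ∈ L := fun M _ =>
    (hcomplete _ (fun K hK => hK.1)).1
  have hmm_le : ∀ M ∈ L, mMinus L M ≤ M := fun M hM =>
    cJoin_le' (hclosed M hM)
      (fun K hK => (hnest K hK.1 M hM).resolve_right (fun h => hK.2 h))
  -- Part 1 : strong reflexivity N_* = N
  have part1 : ∀ N ∈ L, nStar L N = N := by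
    intro N hN
    refine le_antisymm ?_ (le_sInf fun P hP => ?_)
    · by_cases hT : ∃ M, M ∈ L ∧ ¬ M ≤ N
      · set Np := sInf {M | M ∈ L ∧ ¬ M ≤ N} with hNpdef
        have hNpL : Np ∈ L := (hcomplete _ (fun K hK => hK.1)).2
        by_cases hle : Np ≤ N
        · refine le_trans (le_sInf fun M hM => ?_) hle
          exact le_trans (sInf_le ⟨M, hM.1, hM.2, rfl⟩) (hmm_le M hM.1)
        · have h1 : nStar L N ≤ mMinus L Np := sInf_le ⟨Np, hNpL, hle, rfl⟩
          have h2 : mMinus L Np ≤ N := by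
            refine cJoin_le' (hclosed N hN) (fun K hK => ?_)
            by_contra h
            exact hK.2 (sInf_le ⟨hK.1, h⟩)
          exact h1.trans h2
      · push_neg at hT
        exact le_trans le_top (hT ⊤ htop)
    · obtain ⟨M, hML, hMN, rfl⟩ := hP
      exact le_cJoin' (S := {K | K ∈ L ∧ ¬ M ≤ K}) ⟨hN, hMN⟩
  refine ⟨part1, Set.Subset.antisymm ?_ ?_⟩
  · -- Lat(Rk1(Alg L)) ⊆ L
    rintro Y ⟨hYc, hYinv⟩
    set S : Set (Submodule ℂ X) := {M | M ∈ L ∧ M ≤ Y} with hSdef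
    have hSsub : S ⊆ L := fun M hM => hM.1
    set N := cJoin S with hNdef
    have hNL : N ∈ L := (hcomplete S hSsub).1
    have hNY : N ≤ Y := cJoin_le' hYc (fun M hM => hM.2)
    -- key step via rank-one operators
    have key : ∀ M ∈ L, ¬ M ≤ Y → Y ≤ mMinus L M := by
      intro M hM hMY y hy
      by_contra hym
      obtain ⟨η, hη1, hη0⟩ :=
        aux_exists_functional (mMinus L M) (hclosed _ (hmm_mem M hM)) hym
      apply hMY
      intro e he
      by_cases he0 : e = 0
      · exact he0 ▸ Y.zero_mem
      · have halg : rankOne e η ∈ algOf L := by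
          intro K hK x hx
          show η x • e ∈ K
          by_cases hMK : M ≤ K
          · exact K.smul_mem _ (hMK he)
          · have hx' : x ∈ mMinus L M := le_cJoin' (S := {K | K ∈ L ∧ ¬ M ≤ K}) ⟨hK, hMK⟩ hx
            rw [hη0 x hx', zero_smul]
            exact K.zero_mem
        have hrk : rankOne e η ∈ Rk1 (algOf L) :=
          ⟨halg, e, η, he0, fun h => hη1 (by simp [h]), rfl⟩
        have hmem : η y • e ∈ Y := hYinv _ hrk y hy
        have := Y.smul_mem (η y)⁻¹ hmem
        rwa [smul_smul, inv_mul_cancel₀ hη1, one_smul] at this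
    have hYN : Y ≤ N := by
      rw [← part1 N hNL]
      refine le_sInf fun P hP => ?_
      obtain ⟨M, hML, hMN, rfl⟩ := hP
      exact key M hML (fun h => hMN (le_cJoin' (S := S) ⟨hML, h⟩))
    have : Y = N := le_antisymm hYN hNY
    rw [this]
    exact hNL
  · intro M hM
    exact ⟨hclosed M hM, fun A hA x hx => hA.1 M hM x hx⟩
end
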